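/- Let M be a measurable space equipped with a probability measure Q, and let d : M × M → [0,∞] be a measurable symmetric function. Define the iterated kernels by d⁽¹⁾ := d and d⁽ⁿ⁺¹⁾(p,q) := ∫ d⁽ⁿ⁾(p,r) d(r,q) Q(dr), and set ‖L‖_{1,1} := ∬ L(p,q) Q(dp) Q(dq) and ‖L‖_{2,2} := ( ∬ L(p,q)² Q(dp) Q(dq) )^{1/2}. If t ≥ 0 satisfies t · ‖d‖_{2,2} < 1, then the series ∑_{n≥1} tⁿ ‖d⁽ⁿ⁾‖_{1,1} converges (is finite). -/

import Mathlib

open MeasureTheory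
open scoped ENNReal

/-- Iterated kernels: `iterK Q d n` is `d⁽ⁿ⁺¹⁾`, i.e. `iterK Q d 0 = d = d⁽¹⁾` and
`d⁽ⁿ⁺¹⁾(p,q) = ∫ d⁽ⁿ⁾(p,r) d(r,q) Q(dr)`. -/
noncomputable def iterK {M : Type*} [MeasurableSpace M] (Q : Measure M)
    (d : M → M → ℝ≥0∞) : ℕ → M → M → ℝ≥0∞
  | 0 => d
  | n + 1 => fun p q => ∫⁻ r, iterK Q d n p r * d r q ∂Q

/-!
The column masses `gₙ(q) = ∫ d⁽ⁿ⁾(p,q) Q(dp)` satisfy `gₙ(q) = ∫ gₙ₋₁(r) d(r,q) Q(dr)` with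
`g₀ ≡ 1`, so by Cauchy–Schwarz `‖gₙ‖₂ ≤ ‖d‖_{2,2} ‖gₙ₋₁‖₂` and hence
`‖d⁽ⁿ⁾‖_{1,1} = ‖gₙ‖₁ ≤ ‖gₙ‖₂ ≤ ‖d‖_{2,2}ⁿ`. The series is then dominated by the geometric
series with ratio `t ‖d‖_{2,2} < 1`.
-/

namespace ENNReal

theorem rpow_one_half_sq (x : ℝ≥0∞) : (x ^ (1 / 2 : ℝ)) ^ 2 = x := by
  rw [← ENNReal.rpow_two, ← ENNReal.rpow_mul]
  norm_num

end ENNReal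

section

variable {M : Type*} [MeasurableSpace M] {Q : Measure M}

theorem sq_lintegral_mul_le {f g : M → ℝ≥0∞} (hf : AEMeasurable f Q) (hg : AEMeasurable g Q) :
    (∫⁻ x, f x * g x ∂Q) ^ 2 ≤ (∫⁻ x, f x ^ 2 ∂Q) * ∫⁻ x, g x ^ 2 ∂Q := by
  have h := ENNReal.lintegral_mul_le_Lp_mul_Lq Q Real.HolderConjugate.two_two hf hg
  simp only [Pi.mul_apply, ENNReal.rpow_two] at h
  calc (∫⁻ x, f x * g x ∂Q) ^ 2
      ≤ ((∫⁻ x, f x ^ 2 ∂Q) ^ (1 / 2 : ℝ) * (∫⁻ x, g x ^ 2 ∂Q) ^ (1 / 2 : ℝ)) ^ 2 :=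
        pow_le_pow_left' h 2
    _ = (∫⁻ x, f x ^ 2 ∂Q) * ∫⁻ x, g x ^ 2 ∂Q := by
        rw [mul_pow, ENNReal.rpow_one_half_sq, ENNReal.rpow_one_half_sq]

theorem sq_lintegral_le_lintegral_sq [IsProbabilityMeasure Q] {f : M → ℝ≥0∞}
    (hf : AEMeasurable f Q) : (∫⁻ x, f x ∂Q) ^ 2 ≤ ∫⁻ x, f x ^ 2 ∂Q := by
  simpa using sq_lintegral_mul_le hf (aemeasurable_const (b := (1 : ℝ≥0∞)))

theorem lintegral_sq_lintegral_mul_le [SFinite Q] {k : M → M → ℝ≥0∞}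
    (hk : Measurable (Function.uncurry k)) {f : M → ℝ≥0∞} (hf : AEMeasurable f Q) :
    ∫⁻ q, (∫⁻ r, f r * k r q ∂Q) ^ 2 ∂Q
      ≤ (∫⁻ r, f r ^ 2 ∂Q) * ∫⁻ q, ∫⁻ r, k r q ^ 2 ∂Q ∂Q := by
  have hk2 : Measurable fun q => ∫⁻ r, k r q ^ 2 ∂Q :=
    (hk.pow_const 2).lintegral_prod_left'
  calc ∫⁻ q, (∫⁻ r, f r * k r q ∂Q) ^ 2 ∂Q
      ≤ ∫⁻ q, (∫⁻ r, f r ^ 2 ∂Q) * ∫⁻ r, k r q ^ 2 ∂Q ∂Q :=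
        lintegral_mono fun _ => sq_lintegral_mul_le hf hk.of_uncurry_right.aemeasurable
    _ = (∫⁻ r, f r ^ 2 ∂Q) * ∫⁻ q, ∫⁻ r, k r q ^ 2 ∂Q ∂Q := lintegral_const_mul _ hk2

variable [SFinite Q] {d : M → M → ℝ≥0∞}

theorem measurable_uncurry_iterK (hd : Measurable (Function.uncurry d)) (n : ℕ) :
    Measurable (Function.uncurry (iterK Q d n)) := by
  induction n with
  | zero => exact hd
  | succ n ih =>
    have hprod : Measurable fun x : (M × M) × M => iterK Q d n x.1.1 x.2 * d x.2 x.1.2 :=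
      (ih.comp ((measurable_fst.comp measurable_fst).prodMk measurable_snd)).mul
        (hd.comp (measurable_snd.prodMk (measurable_snd.comp measurable_fst)))
    exact hprod.lintegral_prod_right'

theorem measurable_lintegral_iterK (hd : Measurable (Function.uncurry d)) (n : ℕ) :
    Measurable fun q => ∫⁻ p, iterK Q d n p q ∂Q :=
  (measurable_uncurry_iterK hd n).lintegral_prod_left'

theorem lintegral_iterK_succ (hd : Measurable (Function.uncurry d)) (n : ℕ) (q : M) :
    ∫⁻ p, iterK Q d (n + 1) p q ∂Q = ∫⁻ r, (∫⁻ p, iterK Q d n p r ∂Q) * d r q ∂Q := by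
  have hprod : Measurable fun x : M × M => iterK Q d n x.1 x.2 * d x.2 q :=
    (measurable_uncurry_iterK hd n).mul (hd.of_uncurry_right.comp measurable_snd)
  calc ∫⁻ p, iterK Q d (n + 1) p q ∂Q = ∫⁻ p, ∫⁻ r, iterK Q d n p r * d r q ∂Q ∂Q := rfl
    _ = ∫⁻ r, ∫⁻ p, iterK Q d n p r * d r q ∂Q ∂Q := lintegral_lintegral_swap hprod.aemeasurable
    _ = ∫⁻ r, (∫⁻ p, iterK Q d n p r ∂Q) * d r q ∂Q := by
        congr! 2 with r
        exact lintegral_mul_const _ (measurable_uncurry_iterK hd n).of_uncurry_right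

end

section

variable {M : Type*} [MeasurableSpace M] {Q : Measure M} [IsProbabilityMeasure Q]
  {d : M → M → ℝ≥0∞}

theorem lintegral_sq_lintegral_iterK_le (hd : Measurable (Function.uncurry d)) (n : ℕ) :
    ∫⁻ q, (∫⁻ p, iterK Q d n p q ∂Q) ^ 2 ∂Q ≤ (∫⁻ q, ∫⁻ p, d p q ^ 2 ∂Q ∂Q) ^ (n + 1) := by
  induction n with
  | zero =>
    simpa [iterK] using lintegral_sq_lintegral_mul_le (Q := Q) hd (aemeasurable_const (b := (1 : ℝ≥0∞)))
  | succ n ih =>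
    simp_rw [lintegral_iterK_succ hd n]
    calc ∫⁻ q, (∫⁻ r, (∫⁻ p, iterK Q d n p r ∂Q) * d r q ∂Q) ^ 2 ∂Q
        ≤ (∫⁻ r, (∫⁻ p, iterK Q d n p r ∂Q) ^ 2 ∂Q) * ∫⁻ q, ∫⁻ p, d p q ^ 2 ∂Q ∂Q :=
          lintegral_sq_lintegral_mul_le hd (measurable_lintegral_iterK hd n).aemeasurable
      _ ≤ (∫⁻ q, ∫⁻ p, d p q ^ 2 ∂Q ∂Q) ^ (n + 1) * ∫⁻ q, ∫⁻ p, d p q ^ 2 ∂Q ∂Q := by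
          gcongr
      _ = (∫⁻ q, ∫⁻ p, d p q ^ 2 ∂Q ∂Q) ^ (n + 1 + 1) := (pow_succ _ _).symm

theorem lintegral_lintegral_iterK_le (hd : Measurable (Function.uncurry d)) (n : ℕ) :
    ∫⁻ q, ∫⁻ p, iterK Q d n p q ∂Q ∂Q
      ≤ ((∫⁻ q, ∫⁻ p, d p q ^ 2 ∂Q ∂Q) ^ (1 / 2 : ℝ)) ^ (n + 1) := by
  rw [← ENNReal.pow_le_pow_left_iff two_ne_zero, ← pow_mul, mul_comm, pow_mul,
    ENNReal.rpow_one_half_sq]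
  exact (sq_lintegral_le_lintegral_sq (measurable_lintegral_iterK hd n).aemeasurable).trans
    (lintegral_sq_lintegral_iterK_le hd n)

end

theorem stmt5_general {M : Type*} [MeasurableSpace M] (Q : Measure M) [IsProbabilityMeasure Q]
    (d : M → M → ℝ≥0∞) (hmeas : Measurable (Function.uncurry d))
    (t : ℝ)
    (hlt : ENNReal.ofReal t * (∫⁻ q, ∫⁻ p, (d p q) ^ 2 ∂Q ∂Q) ^ (1 / 2 : ℝ) < 1) :
    ∑' n : ℕ, ENNReal.ofReal t ^ (n + 1) * ∫⁻ q, ∫⁻ p, iterK Q d n p q ∂Q ∂Q < ⊤ := by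
  set r := ENNReal.ofReal t * (∫⁻ q, ∫⁻ p, (d p q) ^ 2 ∂Q ∂Q) ^ (1 / 2 : ℝ)
  have hterm : ∀ n : ℕ,
      ENNReal.ofReal t ^ (n + 1) * ∫⁻ q, ∫⁻ p, iterK Q d n p q ∂Q ∂Q ≤ r ^ (n + 1) := by
    intro n
    rw [mul_pow]
    gcongr
    exact lintegral_lintegral_iterK_le hmeas n
  calc ∑' n : ℕ, ENNReal.ofReal t ^ (n + 1) * ∫⁻ q, ∫⁻ p, iterK Q d n p q ∂Q ∂Q
      ≤ ∑' n : ℕ, r ^ (n + 1) := ENNReal.tsum_le_tsum hterm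
    _ = r * (1 - r)⁻¹ := ENNReal.tsum_geometric_add_one r
    _ < ⊤ := ENNReal.mul_lt_top (hlt.trans ENNReal.one_lt_top)
        (ENNReal.inv_lt_top.2 (tsub_pos_of_lt hlt))

/-- If `t ≥ 0` satisfies `t · ‖d‖_{2,2} < 1`, then `∑_{n ≥ 1} tⁿ ‖d⁽ⁿ⁾‖_{1,1} < ∞`,
where `‖L‖_{1,1} = ∬ L dQ²` and `‖L‖_{2,2} = (∬ L² dQ²)^{1/2}`. -/
theorem stmt5 {M : Type*} [MeasurableSpace M] (Q : Measure M) [IsProbabilityMeasure Q]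
    (d : M → M → ℝ≥0∞) (hmeas : Measurable (Function.uncurry d))
    (hsym : ∀ p q, d p q = d q p)
    (t : ℝ) (ht : 0 ≤ t)
    (hlt : ENNReal.ofReal t * (∫⁻ q, ∫⁻ p, (d p q) ^ 2 ∂Q ∂Q) ^ (1 / 2 : ℝ) < 1) :
    ∑' n : ℕ, ENNReal.ofReal t ^ (n + 1) * ∫⁻ q, ∫⁻ p, iterK Q d n p q ∂Q ∂Q < ⊤ :=
  stmt5_general Q d hmeas t hlt
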